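/- arXiv:0904.2441 — 5 statements merged into one kernel-verified Lean document; each statement's English description precedes it below -/
import Mathlib

section
/- For every integer N ≥ 1 and every p ∈ [0,1], if (K1,K2,K3) follows a multinomial distribution with N trials and category probabilities ((1-p)^2, 2p(1-p), p^2), then the expected value of the error-probability estimator satisfies E[g(K1,K2)] = 2N(p - p^{2N})/(2N - 1) + p^{2N}. -/
/-
Write `g k1 k2 = [k1 = k2 = 0] + k2 / (2 k1 + k2)` and represent the ratio as an integral,
`k2 / (2 k1 + k2) * a ^ (2 k1 + k2) = ∫₀ᵃ k2 t ^ (2 k1 + k2 - 1) dt` with `a = 1 - p`. Under the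
integral the sum over `(k1, k2)` is `2p` times the derivative in the middle variable of the
trinomial expansion of `(x + y + z) ^ N` at `(t², 2pt, p²)`, i.e. `2pN (t + p) ^ (2N - 2)`, whose
integral over `[0, 1 - p]` is elementary.
-/

open Finset

/-- Joint probability mass function of `(K1, K2)` where `(K1, K2, K3)` is multinomial with
`N` trials and category probabilities `((1-p)^2, 2p(1-p), p^2)` (with `K3 = N - K1 - K2`). -/
noncomputable def multinomialPMF (N : ℕ) (p : ℝ) (k1 k2 : ℕ) : ℝ :=
  ((N.factorial : ℝ) / (k1.factorial * k2.factorial * (N - k1 - k2).factorial)) *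
    (1 - p) ^ (2 * k1) * (2 * (1 - p) * p) ^ k2 * p ^ (2 * (N - k1 - k2))

/-- The error-probability estimator. -/
noncomputable def g (k1 k2 : ℕ) : ℝ :=
  if k1 = 0 ∧ k2 = 0 then 1
  else if k2 = 0 then 0
  else (k2 : ℝ) / (2 * k1 + k2)

/-- Expected value of `g (K1, K2)` under the multinomial distribution. -/
noncomputable def expectation_g (N : ℕ) (p : ℝ) : ℝ :=
  ∑ k1 ∈ Finset.range (N + 1), ∑ k2 ∈ Finset.range (N - k1 + 1),
    g k1 k2 * multinomialPMF N p k1 k2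

theorem sum_range_mul_pow_pred_mul_choose {R : Type*} [CommSemiring R] (x y : R) (n : ℕ) :
    ∑ k ∈ range (n + 1), k * x ^ (k - 1) * y ^ (n - k) * n.choose k = n * (x + y) ^ (n - 1) := by
  cases n with
  | zero => simp
  | succ m =>
    have hterm (k : ℕ) : ((k + 1 : ℕ) : R) * x ^ (k + 1 - 1) * y ^ (m + 1 - (k + 1)) *
        (m + 1).choose (k + 1) = (m + 1) * (x ^ k * y ^ (m - k) * m.choose k) := by
      have h := congrArg (Nat.cast (R := R)) (Nat.add_one_mul_choose_eq m k)
      push_cast at h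
      simp only [Nat.add_sub_cancel, Nat.add_sub_add_right]
      calc _ = x ^ k * y ^ (m - k) * ((m + 1).choose (k + 1) * (k + 1) : R) := by push_cast; ring
        _ = _ := by rw [← h]; ring
    rw [sum_range_succ', sum_congr rfl fun k _ => hterm k, ← mul_sum, ← add_pow]
    simp

theorem sum_range_sub_mul_pow_mul_pow_pred_mul_choose {R : Type*} [CommSemiring R] (x y : R)
    (n : ℕ) :
    ∑ k ∈ range (n + 1), (n - k : ℕ) * x ^ k * y ^ (n - k - 1) * n.choose k =
      n * (x + y) ^ (n - 1) := by
  rw [add_comm x y, ← sum_range_mul_pow_pred_mul_choose, ← sum_range_reflect]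
  refine sum_congr rfl fun k hk => ?_
  have hk : k ≤ n := Nat.lt_succ_iff.mp (mem_range.mp hk)
  rw [Nat.add_sub_cancel, Nat.sub_sub_self hk, Nat.choose_symm hk]
  ring

theorem sum_trinomial_mul_pow_pred {R : Type*} [CommSemiring R] (x y z : R) (n : ℕ) :
    ∑ k1 ∈ range (n + 1), ∑ k2 ∈ range (n - k1 + 1),
      n.choose k1 * (n - k1).choose k2 * k2 * x ^ k1 * y ^ (k2 - 1) * z ^ (n - k1 - k2) =
      n * (x + y + z) ^ (n - 1) := by
  have inner (k1 : ℕ) : ∑ k2 ∈ range (n - k1 + 1),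
      n.choose k1 * (n - k1).choose k2 * k2 * x ^ k1 * y ^ (k2 - 1) * z ^ (n - k1 - k2) =
      (n - k1 : ℕ) * x ^ k1 * (y + z) ^ (n - k1 - 1) * n.choose k1 := by
    calc _ = x ^ k1 * n.choose k1 * ∑ k2 ∈ range (n - k1 + 1),
          k2 * y ^ (k2 - 1) * z ^ (n - k1 - k2) * (n - k1).choose k2 := by
          rw [mul_sum]
          exact sum_congr rfl fun k2 _ => by ring
      _ = _ := by rw [sum_range_mul_pow_pred_mul_choose]; ring
  rw [sum_congr rfl fun k1 _ => inner k1, sum_range_sub_mul_pow_mul_pow_pred_mul_choose, add_assoc]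

theorem multinomialPMF_eq {N k1 k2 : ℕ} (h : k1 + k2 ≤ N) (p : ℝ) :
    multinomialPMF N p k1 k2 = N.choose k1 * (N - k1).choose k2 * (2 * p) ^ k2 *
      (p ^ 2) ^ (N - k1 - k2) * (1 - p) ^ (2 * k1 + k2) := by
  rw [multinomialPMF, mul_right_comm 2 (1 - p), mul_pow, Nat.cast_choose ℝ (by omega : k1 ≤ N),
    Nat.cast_choose ℝ (by omega : k2 ≤ N - k1)]
  field_simp
  ring

-- The case `k2 = 0` of the ratio relies on `0 / 0 = 0` when also `k1 = 0`.
theorem g_eq (k1 k2 : ℕ) :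
    g k1 k2 = (if k1 = 0 ∧ k2 = 0 then 1 else 0) + (k2 : ℝ) / (2 * k1 + k2) := by
  unfold g
  split_ifs <;> simp_all

theorem expectation_g_eq (N : ℕ) (p : ℝ) :
    expectation_g N p = p ^ (2 * N) + ∑ k1 ∈ range (N + 1), ∑ k2 ∈ range (N - k1 + 1),
      (k2 : ℝ) / (2 * k1 + k2) * multinomialPMF N p k1 k2 := by
  simp [expectation_g, g_eq, add_mul, sum_add_distrib, multinomialPMF, ite_and,
    Nat.factorial_ne_zero]

theorem integral_natCast_mul_pow_pred (a : ℝ) (m k : ℕ) :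
    ∫ t in (0 : ℝ)..a, (k : ℝ) * t ^ (m + k - 1) = k / (m + k) * a ^ (m + k) := by
  rcases Nat.eq_zero_or_pos k with rfl | hk
  · simp
  · have hexp : m + k - 1 + 1 = m + k := by omega
    rw [intervalIntegral.integral_const_mul, integral_pow, hexp,
      zero_pow (by omega), sub_zero, ← Nat.cast_add_one, hexp]
    push_cast
    ring

theorem div_mul_multinomialPMF_eq_integral {N k1 k2 : ℕ} (h : k1 + k2 ≤ N) (p : ℝ) :
    (k2 : ℝ) / (2 * k1 + k2) * multinomialPMF N p k1 k2 = ∫ t in (0 : ℝ)..(1 - p),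
      2 * p * (N.choose k1 * (N - k1).choose k2 * k2 * (t ^ 2) ^ k1 * (2 * p * t) ^ (k2 - 1) *
        (p ^ 2) ^ (N - k1 - k2)) := by
  have hintegrand (t : ℝ) : 2 * p * (N.choose k1 * (N - k1).choose k2 * k2 * (t ^ 2) ^ k1 *
      (2 * p * t) ^ (k2 - 1) * (p ^ 2) ^ (N - k1 - k2)) =
      N.choose k1 * (N - k1).choose k2 * (2 * p) ^ k2 * (p ^ 2) ^ (N - k1 - k2) *
        ((k2 : ℝ) * t ^ (2 * k1 + k2 - 1)) := by
    rcases k2 with _ | j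
    · simp
    · rw [Nat.add_sub_cancel, ← Nat.add_assoc, Nat.add_sub_cancel]
      ring
  simp only [hintegrand]
  rw [intervalIntegral.integral_const_mul, integral_natCast_mul_pow_pred, multinomialPMF_eq h]
  push_cast
  ring

theorem sum_div_mul_multinomialPMF_eq_integral (N : ℕ) (p : ℝ) :
    ∑ k1 ∈ range (N + 1), ∑ k2 ∈ range (N - k1 + 1),
      (k2 : ℝ) / (2 * k1 + k2) * multinomialPMF N p k1 k2 =
      2 * p * N * ∫ t in (0 : ℝ)..(1 - p), ((t + p) ^ 2) ^ (N - 1) := by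
  set f : ℕ → ℕ → ℝ → ℝ := fun k1 k2 t => 2 * p * (N.choose k1 * (N - k1).choose k2 * k2 *
    (t ^ 2) ^ k1 * (2 * p * t) ^ (k2 - 1) * (p ^ 2) ^ (N - k1 - k2))
  have hcont (k1 k2 : ℕ) : Continuous (f k1 k2) := by fun_prop
  have hsum (t : ℝ) : ∑ k1 ∈ range (N + 1), ∑ k2 ∈ range (N - k1 + 1), f k1 k2 t =
      2 * p * N * ((t + p) ^ 2) ^ (N - 1) := by
    simp only [f, ← mul_sum]
    rw [sum_trinomial_mul_pow_pred]
    ring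
  calc _ = ∑ k1 ∈ range (N + 1),
        ∫ t in (0 : ℝ)..(1 - p), ∑ k2 ∈ range (N - k1 + 1), f k1 k2 t := by
        refine sum_congr rfl fun k1 hk1 => ?_
        rw [intervalIntegral.integral_finsetSum fun k2 _ => (hcont k1 k2).intervalIntegrable _ _]
        refine sum_congr rfl fun k2 hk2 => div_mul_multinomialPMF_eq_integral ?_ p
        simp only [mem_range] at hk1 hk2
        omega
    _ = ∫ t in (0 : ℝ)..(1 - p), ∑ k1 ∈ range (N + 1), ∑ k2 ∈ range (N - k1 + 1), f k1 k2 t :=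
        (intervalIntegral.integral_finsetSum fun k1 _ =>
          (continuous_finsetSum _ fun k2 _ => hcont k1 k2).intervalIntegrable _ _).symm
    _ = _ := by simp only [hsum, intervalIntegral.integral_const_mul]

theorem integral_sq_add_pow (p : ℝ) (n : ℕ) :
    ∫ t in (0 : ℝ)..(1 - p), ((t + p) ^ 2) ^ n = (1 - p ^ (2 * n + 1)) / (2 * n + 1) := by
  simp_rw [← pow_mul]
  rw [intervalIntegral.integral_comp_add_right (· ^ (2 * n)), integral_pow]
  push_cast
  ring

theorem expected_value_of_error_probability_estimator_general
    (N : ℕ) (hN : 1 ≤ N) (p : ℝ) :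
    expectation_g N p =
      2 * (N : ℝ) * (p - p ^ (2 * N)) / (2 * (N : ℝ) - 1) + p ^ (2 * N) := by
  obtain ⟨n, rfl⟩ : ∃ n, N = n + 1 := ⟨N - 1, by omega⟩
  rw [expectation_g_eq, sum_div_mul_multinomialPMF_eq_integral, Nat.add_sub_cancel,
    integral_sq_add_pow]
  push_cast
  rw [show (2 * (n + 1) - 1 : ℝ) = 2 * n + 1 by ring]
  field_simp
  ring

theorem expected_value_of_error_probability_estimator
    (N : ℕ) (hN : 1 ≤ N) (p : ℝ) (hp : p ∈ Set.Icc (0 : ℝ) 1) :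
    expectation_g N p =
      2 * (N : ℝ) * (p - p ^ (2 * N)) / (2 * (N : ℝ) - 1) + p ^ (2 * N) :=
  expected_value_of_error_probability_estimator_general N hN p
end

section
/- For every integer N ≥ 1 and every p ∈ [0,1], if (K1,K2,K3) follows a multinomial distribution with N trials and category probabilities ((1-p)^2, 2p(1-p), p^2), then the bias of the error-probability estimator equals E[g(K1,K2)] - p = (p - p^{2N})/(2N - 1). -/
open Finset

/-!
Since `k₂ / (2k₁ + k₂) = ∫₀¹ k₂ t^(2k₁+k₂-1) dt`, the expectation of `g` is
`P(K₁ = K₂ = 0) = p^(2N)` plus the integral over `[0, 1]` of `t⁻¹ ∂ₛG(1, t)`, where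
`G(s, t) = E[s^K₂ t^(2K₁+K₂)] = ((1-p)²t² + 2p(1-p)st + p²)^N` by the trinomial theorem.
Differentiating in `s` gives `∂ₛG(1, t) = 2Np(1-p) t ((1-p)t + p)^(2N-2)`, whose integral
is elementary.
-/

lemma cast_factorial_div_eq_choose_mul_choose {N k₁ k₂ : ℕ} (h₁ : k₁ ≤ N) (h₂ : k₂ ≤ N - k₁) :
    (N.factorial : ℝ) / (k₁.factorial * k₂.factorial * (N - k₁ - k₂).factorial) =
      N.choose k₁ * (N - k₁).choose k₂ := by
  rw [div_eq_iff (by positivity), ← Nat.choose_mul_factorial_mul_factorial h₁,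
    ← Nat.choose_mul_factorial_mul_factorial h₂]
  push_cast
  ring

lemma trinomial_sum (N : ℕ) (a b c : ℝ) :
    ∑ k₁ ∈ range (N + 1), ∑ k₂ ∈ range (N - k₁ + 1),
      (N.factorial : ℝ) / (k₁.factorial * k₂.factorial * (N - k₁ - k₂).factorial) *
        a ^ k₁ * b ^ k₂ * c ^ (N - k₁ - k₂) = (a + b + c) ^ N := by
  rw [add_assoc, add_pow]
  refine sum_congr rfl fun k₁ hk₁ => ?_
  rw [add_pow, mul_sum, sum_mul]
  refine sum_congr rfl fun k₂ hk₂ => ?_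
  rw [cast_factorial_div_eq_choose_mul_choose (Nat.lt_succ_iff.mp (mem_range.mp hk₁))
    (Nat.lt_succ_iff.mp (mem_range.mp hk₂))]
  ring

lemma trinomial_sum_deriv (N : ℕ) (a b c : ℝ) :
    ∑ k₁ ∈ range (N + 1), ∑ k₂ ∈ range (N - k₁ + 1),
      (N.factorial : ℝ) / (k₁.factorial * k₂.factorial * (N - k₁ - k₂).factorial) *
        a ^ k₁ * (k₂ * b ^ (k₂ - 1)) * c ^ (N - k₁ - k₂) = N * (a + b + c) ^ (N - 1) := by
  have hsum := HasDerivAt.fun_sum (u := range (N + 1)) fun k₁ _ =>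
    HasDerivAt.fun_sum (u := range (N - k₁ + 1)) fun k₂ _ =>
      (((hasDerivAt_pow k₂ b).const_mul
        ((N.factorial : ℝ) / (k₁.factorial * k₂.factorial * (N - k₁ - k₂).factorial) *
          a ^ k₁)).mul_const (c ^ (N - k₁ - k₂)))
  simp only [funext fun b => trinomial_sum N a b c] at hsum
  refine hsum.unique ?_
  simpa using (((hasDerivAt_id b).const_add a).add_const c).fun_pow N

lemma g_eq_integral (k₁ k₂ : ℕ) :
    g k₁ k₂ = (if k₁ = 0 ∧ k₂ = 0 then 1 else 0) +
      ∫ t in (0 : ℝ)..1, k₂ * t ^ (2 * k₁ + k₂ - 1) := by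
  rcases k₂ with _ | j
  · by_cases hk₁ : k₁ = 0 <;> simp [g, hk₁]
  · have hg : g k₁ (j + 1) = (j + 1 : ℝ) / (2 * k₁ + j + 1) := by simp [g, add_assoc]
    rw [hg, if_neg (by omega), intervalIntegral.integral_const_mul, integral_pow,
      Nat.add_succ_sub_one, one_pow, zero_pow (Nat.succ_ne_zero _)]
    push_cast
    ring

lemma integral_mul_mul_add_pow (a b : ℝ) (n : ℕ) :
    ∫ t in (0 : ℝ)..1, a * (a * t + b) ^ n = ((a + b) ^ (n + 1) - b ^ (n + 1)) / (n + 1) := by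
  have hderiv : ∀ t ∈ Set.uIcc (0 : ℝ) 1,
      HasDerivAt (fun t => (a * t + b) ^ (n + 1) / (n + 1)) (a * (a * t + b) ^ n) t := by
    intro t _
    refine ((((hasDerivAt_id t).const_mul a).add_const b).pow (n + 1)
      |>.div_const ((n : ℝ) + 1)).congr_deriv ?_
    simp only [id, Nat.add_sub_cancel, Nat.cast_add_one, mul_one]
    field_simp
  rw [intervalIntegral.integral_eq_sub_of_hasDerivAt hderiv
    (Continuous.intervalIntegrable (by fun_prop) _ _)]
  simp only [mul_one, mul_zero, zero_add]
  ring

lemma expectation_g_eq_pow_add_integral (N : ℕ) (p : ℝ) :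
    expectation_g N p = p ^ (2 * N) + ∫ t in (0 : ℝ)..1, ∑ k₁ ∈ range (N + 1),
      ∑ k₂ ∈ range (N - k₁ + 1), k₂ * t ^ (2 * k₁ + k₂ - 1) * multinomialPMF N p k₁ k₂ := by
  have hatom : ∑ k₁ ∈ range (N + 1), ∑ k₂ ∈ range (N - k₁ + 1),
      (if k₁ = 0 ∧ k₂ = 0 then 1 else 0) * multinomialPMF N p k₁ k₂ = p ^ (2 * N) := by
    simp [ite_and, multinomialPMF, Nat.factorial_ne_zero]
  rw [intervalIntegral.integral_finsetSum fun _ _ =>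
    Continuous.intervalIntegrable (by fun_prop) _ _]
  simp only [expectation_g, g_eq_integral, add_mul, sum_add_distrib, hatom]
  congr 1
  refine sum_congr rfl fun k₁ _ => ?_
  rw [intervalIntegral.integral_finsetSum fun _ _ =>
    Continuous.intervalIntegrable (by fun_prop) _ _]
  simp only [intervalIntegral.integral_mul_const]

lemma sum_mul_pow_mul_multinomialPMF (N : ℕ) (p t : ℝ) :
    ∑ k₁ ∈ range (N + 1), ∑ k₂ ∈ range (N - k₁ + 1),
      k₂ * t ^ (2 * k₁ + k₂ - 1) * multinomialPMF N p k₁ k₂ =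
        2 * N * p * ((1 - p) * ((1 - p) * t + p) ^ (2 * (N - 1))) := by
  have hterm : ∀ k₁ k₂ : ℕ, k₂ * t ^ (2 * k₁ + k₂ - 1) * multinomialPMF N p k₁ k₂ =
      2 * p * (1 - p) *
        ((N.factorial : ℝ) / (k₁.factorial * k₂.factorial * (N - k₁ - k₂).factorial) *
          ((1 - p) ^ 2 * t ^ 2) ^ k₁ * (k₂ * (2 * p * (1 - p) * t) ^ (k₂ - 1)) *
            (p ^ 2) ^ (N - k₁ - k₂)) := by
    intro k₁ k₂
    rcases k₂ with _ | j
    · simp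
    · simp only [multinomialPMF, Nat.add_sub_cancel, Nat.add_succ_sub_one, mul_pow, ← pow_mul]
      ring
  simp only [hterm, ← mul_sum, trinomial_sum_deriv]
  rw [show (1 - p) ^ 2 * t ^ 2 + 2 * p * (1 - p) * t + p ^ 2 = ((1 - p) * t + p) ^ 2 by ring,
    ← pow_mul]
  ring

theorem bias_of_error_probability_estimator_general
    (N : ℕ) (hN : 1 ≤ N) (p : ℝ) :
    expectation_g N p - p = (p - p ^ (2 * N)) / (2 * (N : ℝ) - 1) := by
  rw [expectation_g_eq_pow_add_integral,
    intervalIntegral.integral_congr fun t _ => sum_mul_pow_mul_multinomialPMF N p t,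
    intervalIntegral.integral_const_mul, integral_mul_mul_add_pow]
  obtain ⟨n, rfl⟩ : ∃ n, N = n + 1 := ⟨N - 1, by omega⟩
  simp only [sub_add_cancel, one_pow, Nat.add_sub_cancel]
  push_cast
  rw [show 2 * ((n : ℝ) + 1) - 1 = 2 * n + 1 by ring]
  field_simp
  ring

theorem bias_of_error_probability_estimator
    (N : ℕ) (hN : 1 ≤ N) (p : ℝ) (hp : p ∈ Set.Icc (0 : ℝ) 1) :
    expectation_g N p - p = (p - p ^ (2 * N)) / (2 * (N : ℝ) - 1) :=
  bias_of_error_probability_estimator_general N hN p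
end

section
/- For every integer N ≥ 46 and every p ∈ [0, 9/10], the bias of the error-probability estimator is below one percent: (p - p^{2N})/(2N - 1) < 1/100, i.e., E[g(K1,K2)] - p < 1/100 when (K1,K2,K3) follows a multinomial distribution with N trials and category probabilities ((1-p)^2, 2p(1-p), p^2). -/
open Finset

/-!
Write `g = 𝟙[k₁ = k₂ = 0] + k₂ / (2k₁ + k₂)` and `k₂ / (2k₁ + k₂) = ∫₀¹ k₂ y^(2k₁+k₂-1) dy`.
Inside the integral the sum over the multinomial law is a derivative of the trinomial
expansion of `((1-p)² y² + 2(1-p)p y + p²)^N = ((1-p) y + p)^(2N)`, namely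
`2N (1-p) p ((1-p) y + p)^(2N-2)`, whose integral over `[0,1]` is
`2N p (1 - p^(2N-1)) / (2N-1)`. Hence `E[g] - p = (p - p^(2N)) / (2N-1)`, which for `N ≥ 46`
and `p ≤ 9/10` is at most `(9/10) / 91 < 1/100`.
-/

section Trinomial

variable {R : Type*} [CommSemiring R]

def trinomialTerm (M k₁ k₂ : ℕ) (a b c : R) : R :=
  (M.choose k₁ * (M - k₁).choose k₂ : ℕ) * a ^ k₁ * b ^ k₂ * c ^ (M - k₁ - k₂)

theorem sum_trinomialTerm (M : ℕ) (a b c : R) :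
    ∑ k₁ ∈ range (M + 1), ∑ k₂ ∈ range (M - k₁ + 1), trinomialTerm M k₁ k₂ a b c =
      (a + b + c) ^ M := by
  rw [add_assoc, add_pow]
  refine sum_congr rfl fun k₁ _ => ?_
  rw [add_pow, mul_sum, sum_mul]
  refine sum_congr rfl fun k₂ _ => ?_
  simp only [trinomialTerm]
  push_cast
  ring

theorem add_one_mul_choose_mul_choose (M k₁ j : ℕ) :
    (j + 1) * ((M + 1).choose k₁ * (M + 1 - k₁).choose (j + 1)) =
      (M + 1) * (M.choose k₁ * (M - k₁).choose j) := by
  rcases le_or_gt k₁ M with h | h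
  · rw [show M + 1 - k₁ = M - k₁ + 1 by omega]
    calc (j + 1) * ((M + 1).choose k₁ * (M - k₁ + 1).choose (j + 1))
        = (M + 1).choose k₁ * ((M - k₁ + 1).choose (j + 1) * (j + 1)) := by ring
      _ = (M + 1).choose k₁ * ((M - k₁ + 1) * (M - k₁).choose j) := by
        rw [Nat.add_one_mul_choose_eq]
      _ = (M + 1).choose k₁ * (M + 1 - k₁) * (M - k₁).choose j := by
        rw [show M - k₁ + 1 = M + 1 - k₁ by omega]; ring
      _ = (M + 1) * (M.choose k₁ * (M - k₁).choose j) := by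
        rw [← Nat.choose_mul_succ_eq]; ring
  · simp [Nat.choose_eq_zero_of_lt h, show M + 1 - k₁ = 0 by omega]

theorem add_one_mul_trinomialTerm_succ (M k₁ j : ℕ) (a b c : R) :
    (j + 1) * trinomialTerm (M + 1) k₁ (j + 1) a b c =
      (M + 1) * b * trinomialTerm M k₁ j a b c := by
  have key := congrArg (Nat.cast (R := R)) (add_one_mul_choose_mul_choose M k₁ j)
  simp only [trinomialTerm, show M + 1 - k₁ - (j + 1) = M - k₁ - j by omega]
  calc _ = ((j + 1 : ℕ) : R) * (((M + 1).choose k₁ * (M + 1 - k₁).choose (j + 1) : ℕ) : R) *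
        (a ^ k₁ * b ^ (j + 1) * c ^ (M - k₁ - j)) := by push_cast; ring
    _ = _ := by rw [← Nat.cast_mul, key]; push_cast; ring

theorem trinomialTerm_mul_pow (M k₁ k₂ : ℕ) (a b c x : R) :
    trinomialTerm M k₁ k₂ a b c * x ^ (2 * k₁ + k₂) =
      trinomialTerm M k₁ k₂ (a * x ^ 2) (b * x) c := by
  simp only [trinomialTerm]
  ring

theorem sum_mul_trinomialTerm_mul_pow (M : ℕ) (a b c x : R) :
    ∑ k₁ ∈ range (M + 2), ∑ k₂ ∈ range (M + 1 - k₁ + 1),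
        (k₂ : R) * trinomialTerm (M + 1) k₁ k₂ a b c * x ^ (2 * k₁ + k₂ - 1) =
      (M + 1) * b * (a * x ^ 2 + b * x + c) ^ M := by
  rw [sum_range_succ, ← sum_trinomialTerm, mul_sum]
  simp only [Nat.sub_self, zero_add, sum_range_one, Nat.cast_zero, zero_mul, add_zero]
  refine sum_congr rfl fun k₁ hk₁ => ?_
  rw [show M + 1 - k₁ + 1 = M - k₁ + 1 + 1 by grind, sum_range_succ', mul_sum]
  simp only [Nat.cast_zero, zero_mul, add_zero]
  refine sum_congr rfl fun j _ => ?_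
  rw [show 2 * k₁ + (j + 1) - 1 = 2 * k₁ + j by omega, ← trinomialTerm_mul_pow, Nat.cast_succ,
    add_one_mul_trinomialTerm_succ]
  ring

end Trinomial

theorem multinomialPMF_zero_zero (N : ℕ) (p : ℝ) : multinomialPMF N p 0 0 = p ^ (2 * N) := by
  simp [multinomialPMF, (Nat.factorial_pos N).ne']

theorem multinomialPMF_eq_trinomialTerm {N k₁ k₂ : ℕ} (h : k₁ + k₂ ≤ N) (p : ℝ) :
    multinomialPMF N p k₁ k₂ = trinomialTerm N k₁ k₂ ((1 - p) ^ 2) (2 * (1 - p) * p) (p ^ 2) := by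
  rw [multinomialPMF, trinomialTerm, Nat.cast_mul, Nat.cast_choose ℝ (by omega : k₁ ≤ N),
    Nat.cast_choose ℝ (by omega : k₂ ≤ N - k₁), Nat.sub_sub, pow_mul, pow_mul]
  field_simp

theorem sum_mul_multinomialPMF_mul_pow (M : ℕ) (p y : ℝ) :
    ∑ k₁ ∈ range (M + 2), ∑ k₂ ∈ range (M + 1 - k₁ + 1),
        (k₂ : ℝ) * multinomialPMF (M + 1) p k₁ k₂ * y ^ (2 * k₁ + k₂ - 1) =
      2 * (M + 1) * (1 - p) * p * ((1 - p) * y + p) ^ (2 * M) := by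
  rw [sum_congr rfl fun k₁ hk₁ => sum_congr rfl fun k₂ hk₂ => by
      rw [multinomialPMF_eq_trinomialTerm (by grind)],
    sum_mul_trinomialTerm_mul_pow, pow_mul]
  ring

-- At `k₁ = k₂ = 0` the quotient is `0 / 0 = 0`.
theorem g_eq_ite_add_div (k₁ k₂ : ℕ) :
    g k₁ k₂ = (if k₁ = 0 ∧ k₂ = 0 then 1 else 0) + k₂ / (2 * k₁ + k₂) := by
  unfold g
  split_ifs <;> simp_all

theorem natCast_div_add_eq_integral (m n : ℕ) :
    (m : ℝ) / (n + m) = ∫ y in (0 : ℝ)..1, m * y ^ (n + m - 1) := by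
  rw [intervalIntegral.integral_const_mul, integral_pow]
  rcases Nat.eq_zero_or_pos m with rfl | hm
  · simp
  · rw [Nat.sub_add_cancel (by omega), one_pow, zero_pow (by omega), Nat.cast_sub (by omega)]
    push_cast
    ring

theorem integral_mul_pow_mul_add (n : ℕ) (c d : ℝ) :
    ∫ y in (0 : ℝ)..1, c * (c * y + d) ^ n = ((c + d) ^ (n + 1) - d ^ (n + 1)) / (n + 1) := by
  rw [intervalIntegral.integral_const_mul, ← smul_eq_mul,
    intervalIntegral.smul_integral_comp_mul_add (fun y => y ^ n), integral_pow]
  simp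

theorem expectation_g_eq_add_sum (N : ℕ) (p : ℝ) :
    expectation_g N p = p ^ (2 * N) +
      ∑ k₁ ∈ range (N + 1), ∑ k₂ ∈ range (N - k₁ + 1),
        (k₂ : ℝ) / (2 * k₁ + k₂) * multinomialPMF N p k₁ k₂ := by
  simp [expectation_g, g_eq_ite_add_div, add_mul, sum_add_distrib, ite_and,
    multinomialPMF_zero_zero]

theorem sum_div_mul_multinomialPMF (M : ℕ) (p : ℝ) :
    ∑ k₁ ∈ range (M + 2), ∑ k₂ ∈ range (M + 1 - k₁ + 1),
        (k₂ : ℝ) / (2 * k₁ + k₂) * multinomialPMF (M + 1) p k₁ k₂ =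
      2 * (M + 1) * p * (1 - p ^ (2 * M + 1)) / (2 * M + 1) := by
  have hintegral : ∀ k₁ k₂ : ℕ, (k₂ : ℝ) / (2 * k₁ + k₂) * multinomialPMF (M + 1) p k₁ k₂ =
      ∫ y in (0 : ℝ)..1, (k₂ : ℝ) * multinomialPMF (M + 1) p k₁ k₂ * y ^ (2 * k₁ + k₂ - 1) := by
    intro k₁ k₂
    rw [show (2 * k₁ + k₂ : ℝ) = ((2 * k₁ : ℕ) : ℝ) + k₂ by push_cast; ring,
      natCast_div_add_eq_integral, ← intervalIntegral.integral_mul_const]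
    congr 1 with y
    ring
  have hcont : ∀ k₁ k₂ : ℕ, Continuous fun y : ℝ =>
      (k₂ : ℝ) * multinomialPMF (M + 1) p k₁ k₂ * y ^ (2 * k₁ + k₂ - 1) :=
    fun _ _ => by fun_prop
  calc _ = ∫ y in (0 : ℝ)..1, ∑ k₁ ∈ range (M + 2), ∑ k₂ ∈ range (M + 1 - k₁ + 1),
          (k₂ : ℝ) * multinomialPMF (M + 1) p k₁ k₂ * y ^ (2 * k₁ + k₂ - 1) := by
        simp only [hintegral]
        rw [intervalIntegral.integral_finsetSum fun k₁ _ =>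
          (continuous_finsetSum _ fun k₂ _ => hcont k₁ k₂).intervalIntegrable 0 1]
        exact sum_congr rfl fun k₁ _ => (intervalIntegral.integral_finsetSum fun k₂ _ =>
          (hcont k₁ k₂).intervalIntegrable 0 1).symm
    _ = ∫ y in (0 : ℝ)..1, 2 * (M + 1) * p * ((1 - p) * ((1 - p) * y + p) ^ (2 * M)) := by
        congr 1 with y
        rw [sum_mul_multinomialPMF_mul_pow]
        ring
    _ = _ := by
        rw [intervalIntegral.integral_const_mul, integral_mul_pow_mul_add]
        push_cast
        ring

theorem expectation_g_sub_eq {N : ℕ} (hN : 1 ≤ N) (p : ℝ) :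
    expectation_g N p - p = (p - p ^ (2 * N)) / (2 * N - 1) := by
  obtain ⟨M, rfl⟩ := Nat.exists_eq_add_of_le' hN
  rw [expectation_g_eq_add_sum, sum_div_mul_multinomialPMF, Nat.cast_succ,
    show 2 * ((M : ℝ) + 1) - 1 = 2 * M + 1 by ring]
  field_simp
  ring

theorem bias_below_one_percent
    (N : ℕ) (hN : 46 ≤ N) (p : ℝ) (hp : p ∈ Set.Icc (0 : ℝ) (9 / 10)) :
    (p - p ^ (2 * N)) / (2 * (N : ℝ) - 1) < 1 / 100 ∧
    expectation_g N p - p < 1 / 100 := by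
  obtain ⟨hp₀, hp₁⟩ := hp
  have hden : (91 : ℝ) ≤ 2 * N - 1 := by
    have : (46 : ℝ) ≤ N := by exact_mod_cast hN
    linarith
  have hbias : (p - p ^ (2 * N)) / (2 * (N : ℝ) - 1) < 1 / 100 :=
    calc _ ≤ (9 / 10) / 91 :=
          div_le_div₀ (by norm_num) (by linarith [pow_nonneg hp₀ (2 * N)]) (by norm_num) hden
      _ < 1 / 100 := by norm_num
  exact ⟨hbias, by rwa [expectation_g_sub_eq (by omega)]⟩
end

section
/- For every integer R ≥ 1 and every p ∈ [0,1], the identity ∑_{i=1}^{R} C(R, R-(i-1)) (1-p)^{R-(i-1)} p^{i-1} = 1 - p^R holds. Consequently, if each of N tags is independently missed in each of R independent reader sessions with probability p ∈ [0,1), with all NR read/miss events mutually independent, and K_i denotes the number of tags read in exactly R-(i-1) sessions, then E[(∑_{i=1}^{R} K_i)/(1 - p^R)] = N, i.e., the generalized tag-set-cardinality estimator evaluated at the true error probability is unbiased. -/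
/-!
Grouping the tags by read count, `∑ i, K_i` counts the tags read at least once, so it is a sum of
`N` indicators. By independence a tag is missed in all `R` sessions with probability `p ^ R`, so
by linearity of expectation `E[∑ i, K_i] = N (1 - p ^ R)`. The binomial identity is the expansion
of `((1 - p) + p) ^ R` with its term `p ^ R` removed.
-/

open MeasureTheory Finset

/-- Product measure modelling `N` tags read in `R` sessions, where `ω (t, s) = true` means
tag `t` is missed in session `s`; misses are i.i.d. Bernoulli(`p`). -/
noncomputable def readingMeasure (N R : ℕ) (p : ℝ) (hp : p ≤ 1) :
    Measure (Fin N × Fin R → Bool) :=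
  Measure.pi fun _ : Fin N × Fin R =>
    (PMF.bernoulli (Real.toNNReal p) (Real.toNNReal_le_one.mpr hp)).toMeasure

/-- `K N R i ω` is the number of tags read in exactly `R - (i - 1)` of the `R` sessions. -/
def K (N R i : ℕ) (ω : Fin N × Fin R → Bool) : ℕ :=
  (Finset.univ.filter fun t : Fin N =>
    (Finset.univ.filter fun s : Fin R => ω (t, s) = false).card = R - (i - 1)).card

theorem Finset.sum_Icc_one_reflect {M : Type*} [AddCommMonoid M] (f : ℕ → M) (n : ℕ) :
    ∑ i ∈ Icc 1 n, f (n - (i - 1)) = ∑ k ∈ Icc 1 n, f k :=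
  sum_nbij' (fun i ↦ n - (i - 1)) (fun k ↦ n - (k - 1)) (by simp; omega) (by simp; omega)
    (by simp; omega) (by simp; omega) (fun _ _ ↦ rfl)

theorem sum_choose_mul_one_sub_pow_mul_pow {A : Type*} [CommRing A] (p : A) (n : ℕ) :
    ∑ i ∈ Icc 1 n, (n.choose (n - (i - 1)) : A) * (1 - p) ^ (n - (i - 1)) * p ^ (i - 1) =
      1 - p ^ n := by
  set g : ℕ → A := fun k ↦ (1 - p) ^ k * p ^ (n - k) * n.choose k
  have hterm : ∀ i ∈ Icc 1 n,
      (n.choose (n - (i - 1)) : A) * (1 - p) ^ (n - (i - 1)) * p ^ (i - 1) = g (n - (i - 1)) := by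
    intro i hi
    simp only [g, show n - (n - (i - 1)) = i - 1 by grind]
    ring
  have hbinom : 1 = g 0 + ∑ k ∈ Icc 1 n, g k := by
    rw [← one_pow n, ← sub_add_cancel 1 p, add_pow, ← Nat.Ico_zero_eq_range,
      sum_eq_sum_Ico_succ_bot (by omega : 0 < n + 1), zero_add, Ico_add_one_right_eq_Icc]
  rw [sum_congr rfl hterm, sum_Icc_one_reflect g, eq_sub_iff_add_eq, hbinom]
  simp [g, add_comm]

theorem Finset.sum_card_filter_eq_sub_eq_card_filter_ne_zero {α : Type*} (s : Finset α)
    (c : α → ℕ) {n : ℕ} (hc : ∀ a ∈ s, c a ≤ n) :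
    ∑ i ∈ Icc 1 n, #{a ∈ s | c a = n - (i - 1)} = #{a ∈ s | c a ≠ 0} := by
  classical
  rw [sum_Icc_one_reflect (fun k ↦ #{a ∈ s | c a = k}),
    card_eq_sum_card_fiberwise (f := c) (t := Icc 1 n) fun a ha ↦ by
      simp only [coe_filter, Set.mem_ofPred_eq, coe_Icc, Set.mem_Icc] at ha ⊢
      have := hc a ha.1
      omega]
  refine sum_congr rfl fun k _ ↦ ?_
  rw [filter_filter]
  exact congrArg card (filter_congr fun a _ ↦ by grind)

theorem sum_K_eq_card_read_at_least_once (N R : ℕ) (ω : Fin N × Fin R → Bool) :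
    ∑ i ∈ Icc 1 R, K N R i ω = #{t | ∃ s, ω (t, s) = false} := by
  unfold K
  rw [sum_card_filter_eq_sub_eq_card_filter_ne_zero _ _ fun t _ ↦
    (card_le_univ _).trans_eq (Fintype.card_fin R)]
  simp_rw [← pos_iff_ne_zero, card_pos, filter_nonempty_iff, mem_univ, true_and]

instance readingMeasure.instIsProbabilityMeasure (N R : ℕ) (p : ℝ) (hp : p ≤ 1) : IsProbabilityMeasure (readingMeasure N R p hp) := by
  unfold readingMeasure; infer_instance

theorem integral_card_filter {Ω ι : Type*} [MeasurableSpace Ω] [Fintype ι] (μ : Measure Ω)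
    [IsFiniteMeasure μ] (P : ι → Ω → Prop) [∀ ω, DecidablePred (P · ω)]
    (hP : ∀ i, MeasurableSet {ω | P i ω}) :
    ∫ ω, (#{i | P i ω} : ℝ) ∂μ = ∑ i, μ.real {ω | P i ω} := by
  have hind : ∀ ω, (#{i | P i ω} : ℝ) = ∑ i, {ω | P i ω}.indicator 1 ω := fun ω ↦ by
    rw [natCast_card_filter]
    simp only [Set.indicator_apply, Set.mem_ofPred_eq, Pi.one_apply]
  simp_rw [hind]
  rw [integral_finsetSum _ fun i _ ↦ (integrable_const 1).indicator (hP i)]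
  exact sum_congr rfl fun i _ ↦ integral_indicator_one (hP i)

theorem readingMeasure_missed_all (N R : ℕ) (p : ℝ) (hp : p ≤ 1) (t : Fin N) :
    readingMeasure N R p hp {ω | ∀ s, ω (t, s) = true} = ENNReal.ofReal p ^ R := by
  have hset : {ω : Fin N × Fin R → Bool | ∀ s, ω (t, s) = true} =
      (({t} ×ˢ univ : Finset (Fin N × Fin R)) : Set (Fin N × Fin R)).pi fun _ ↦ {true} := by
    ext ω; simp
  rw [hset, readingMeasure, Measure.pi_pi_finset, prod_const, card_product, card_singleton,
    card_univ, Fintype.card_fin, one_mul,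
    PMF.toMeasure_apply_singleton _ _ (measurableSet_singleton _)]
  -- the Bernoulli mass of `true` is `↑p.toNNReal`, which is `ENNReal.ofReal p` by definition
  rfl

theorem readingMeasure_real_read (N R : ℕ) {p : ℝ} (hp₀ : 0 ≤ p) (hp₁ : p ≤ 1) (t : Fin N) :
    (readingMeasure N R p hp₁).real {ω | ∃ s, ω (t, s) = false} = 1 - p ^ R := by
  have hcompl : {ω : Fin N × Fin R → Bool | ∃ s, ω (t, s) = false} =
      {ω | ∀ s, ω (t, s) = true}ᶜ := by
    ext ω; simp
  rw [hcompl, probReal_compl_eq_one_sub (Set.toFinite _).measurableSet, measureReal_def,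
    readingMeasure_missed_all, ENNReal.toReal_pow, ENNReal.toReal_ofReal hp₀]

theorem generalized_cardinality_estimator_unbiased
    (R : ℕ) (hR : 1 ≤ R) (p : ℝ) (hp : p ∈ Set.Icc (0 : ℝ) 1) (N : ℕ) :
    (∑ i ∈ Finset.Icc 1 R,
        (R.choose (R - (i - 1)) : ℝ) * (1 - p) ^ (R - (i - 1)) * p ^ (i - 1) = 1 - p ^ R) ∧
    (p < 1 →
      ∫ ω, (∑ i ∈ Finset.Icc 1 R, (K N R i ω : ℝ)) / (1 - p ^ R)
          ∂(readingMeasure N R p hp.2) = (N : ℝ)) := by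
  refine ⟨sum_choose_mul_one_sub_pow_mul_pow p R, fun hp1 ↦ ?_⟩
  have hpR : 1 - p ^ R ≠ 0 := (sub_pos.2 (pow_lt_one₀ hp.1 hp1 (by omega))).ne'
  simp_rw [← Nat.cast_sum, sum_K_eq_card_read_at_least_once]
  rw [integral_div, integral_card_filter _ _ fun t ↦ (Set.toFinite _).measurableSet]
  simp only [readingMeasure_real_read N R hp.1 hp.2, sum_const, card_univ, Fintype.card_fin, nsmul_eq_mul]
  exact mul_div_cancel_right₀ _ hpR
end

section
/- For every integer N ≥ 1 and every p ∈ (0,1), the finite double sum ∑_{k1=0}^{N} ∑_{k2=1}^{N-k1} (k2/(2k1 + k2)) · (N!/(k1! k2! (N-k1-k2)!)) · (1-p)^{2k1} · (2(1-p)p)^{k2} · p^{2(N-k1-k2)} equals 2N(p - p^{2N})/(2N - 1). -/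
/-!
Write `k2 = j + 1` and `N = M + 1`. The factor `k2` cancels against `k2!`, turning each term into
`2N(1-p)p · C(M,k1) C(M-k1,j) 2^j · (1-p)^s p^(2M-s) / (s+1)` with `s = 2k1 + j`.
Since `(1+x)^(2M) = (x² + (1 + 2x))^M`, grouping by `s` collapses the double sum to
`∑ C(2M,s) (1-p)^s p^(2M-s) / (s+1)`, and `(2M+1) C(2M,s) = (s+1) C(2M+1,s+1)` sums this to
`(1 - p^(2M+1)) / ((2M+1)(1-p))` by the binomial theorem.
-/

open Finset Polynomial Nat

theorem one_add_pow_two_mul_eq_sum_choose_mul_choose {R : Type*} [CommSemiring R] (M : ℕ)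
    (x : R) :
    (1 + x) ^ (2 * M) = ∑ k ∈ range (M + 1), ∑ j ∈ range (M - k + 1),
      ((M.choose k * (M - k).choose j * 2 ^ j : ℕ) : R) * x ^ (2 * k + j) := by
  rw [pow_mul, show (1 + x) ^ 2 = x ^ 2 + (2 * x + 1) by ring, add_pow]
  refine sum_congr rfl fun k _ => ?_
  rw [add_pow, mul_sum, sum_mul]
  refine sum_congr rfl fun j _ => ?_
  push_cast
  ring

theorem sum_choose_mul_choose_mul_two_pow_mul {R : Type*} [CommSemiring R] (M : ℕ)
    (g : ℕ → R) :
    ∑ k ∈ range (M + 1), ∑ j ∈ range (M - k + 1),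
      ((M.choose k * (M - k).choose j * 2 ^ j : ℕ) : R) * g (2 * k + j)
      = ∑ s ∈ range (2 * M + 1), ((2 * M).choose s : R) * g s := by
  -- Apply the functional `X ^ n ↦ g n` to both binomial expansions of `(1 + X) ^ (2 * M)`.
  let L : R[X] →ₗ[R] R := lsum fun n => (LinearMap.id : R →ₗ[R] R).smulRight (g n)
  have hL : ∀ (c : R) (n : ℕ), L (C c * X ^ n) = c * g n := fun c n => by
    simp [L, C_mul_X_pow_eq_monomial, sum_monomial_index]
  have hexpand := congrArg L (one_add_pow_two_mul_eq_sum_choose_mul_choose M (X : R[X]))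
  rw [add_comm, add_pow] at hexpand
  simp only [one_pow, mul_one, map_sum, ← map_natCast C, X_pow_mul, hL] at hexpand
  simpa only [mul_comm] using hexpand.symm

theorem sum_choose_mul_pow_mul_pow_div_succ {K : Type*} [Field K] [CharZero K] (n : ℕ) (p q : K)
    (hq : q ≠ 0) :
    ∑ s ∈ range (n + 1), (n.choose s : K) * (q ^ s * p ^ (n - s) / (s + 1))
      = ((q + p) ^ (n + 1) - p ^ (n + 1)) / ((n + 1) * q) := by
  have hterm : ∀ s ∈ range (n + 1), (n.choose s : K) * (q ^ s * p ^ (n - s) / (s + 1))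
      = q ^ (s + 1) * p ^ (n + 1 - (s + 1)) * ((n + 1).choose (s + 1) : K) / ((n + 1) * q) := by
    intro s _
    have hchoose : ((n + 1 : ℕ) : K) * n.choose s = (n + 1).choose (s + 1) * (s + 1 : ℕ) := by
      exact_mod_cast Nat.add_one_mul_choose_eq n s
    push_cast at hchoose
    rw [Nat.add_sub_add_right]
    field_simp
    linear_combination q ^ (s + 1) * p ^ (n - s) * hchoose
  rw [sum_congr rfl hterm, ← sum_div, add_pow, sum_range_succ' _ (n + 1)]
  simp

theorem Nat.choose_mul_choose_mul_factorial_mul_factorial_mul_factorial {n k j : ℕ}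
    (h : k + j ≤ n) :
    n.choose k * (n - k).choose j * (k ! * j ! * (n - k - j)!) = n ! := by
  rw [← Nat.choose_mul_factorial_mul_factorial (n := n) (k := k) (by omega),
    ← Nat.choose_mul_factorial_mul_factorial (n := n - k) (k := j) (by omega)]
  ring

theorem estimator_mul_trinomial_weight_eq {K : Type*} [Field K] [CharZero K] (p q : K)
    {M k j : ℕ} (h : k + j ≤ M) :
    ((j + 1 : ℕ) : K) / (2 * k + (j + 1 : ℕ)) *
        (((M + 1)! : K) / (k ! * (j + 1)! * (M + 1 - k - (j + 1))!) *
          q ^ (2 * k) * (2 * q * p) ^ (j + 1) * p ^ (2 * (M + 1 - k - (j + 1))))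
      = 2 * (M + 1) * q * p * (((M.choose k * (M - k).choose j * 2 ^ j : ℕ) : K) *
          (q ^ (2 * k + j) * p ^ (2 * M - (2 * k + j)) / ((2 * k + j : ℕ) + 1))) := by
  have hfac := Nat.choose_mul_choose_mul_factorial_mul_factorial_mul_factorial h
  obtain ⟨c, rfl⟩ : ∃ c, M = k + j + c := ⟨M - k - j, by omega⟩
  rw [show k + j + c - k - j = c by omega] at hfac
  rw [show k + j + c + 1 - k - (j + 1) = c by omega,
    show 2 * (k + j + c) - (2 * k + j) = j + 2 * c by omega,
    Nat.factorial_succ, Nat.factorial_succ, ← hfac]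
  have hk : (k ! : K) ≠ 0 := Nat.cast_ne_zero.mpr k.factorial_ne_zero
  have hj : (j ! : K) ≠ 0 := Nat.cast_ne_zero.mpr j.factorial_ne_zero
  have hc : (c ! : K) ≠ 0 := Nat.cast_ne_zero.mpr c.factorial_ne_zero
  have hs : (2 * k + (j + 1) : K) ≠ 0 := by exact_mod_cast (2 * k + j).succ_ne_zero
  have hs' : (2 * k + j + 1 : K) ≠ 0 := by exact_mod_cast (2 * k + j).succ_ne_zero
  push_cast
  field_simp
  ring

theorem central_summation_identity (N : ℕ) (hN : 1 ≤ N) (p : ℝ) (hp : p ∈ Set.Ioo (0 : ℝ) 1) :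
    ∑ k1 ∈ Finset.range (N + 1), ∑ k2 ∈ Finset.Icc 1 (N - k1),
      ((k2 : ℝ) / (2 * k1 + k2)) *
        (((N.factorial : ℝ) / (k1.factorial * k2.factorial * (N - k1 - k2).factorial)) *
          (1 - p) ^ (2 * k1) * (2 * (1 - p) * p) ^ k2 * p ^ (2 * (N - k1 - k2)))
      = 2 * (N : ℝ) * (p - p ^ (2 * N)) / (2 * (N : ℝ) - 1) := by
  obtain ⟨M, rfl⟩ : ∃ M, N = M + 1 := ⟨N - 1, by omega⟩
  have hq : 1 - p ≠ 0 := sub_ne_zero.mpr hp.2.ne'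
  calc _ = 2 * (M + 1) * (1 - p) * p * ∑ k ∈ range (M + 1), ∑ j ∈ range (M - k + 1),
        ((M.choose k * (M - k).choose j * 2 ^ j : ℕ) : ℝ) *
          ((1 - p) ^ (2 * k + j) * p ^ (2 * M - (2 * k + j)) / ((2 * k + j : ℕ) + 1)) := by
        rw [sum_range_succ, Nat.sub_self, Icc_eq_empty_of_lt one_pos, sum_empty, add_zero, mul_sum]
        refine sum_congr rfl fun k hk => ?_
        have hkM : k ≤ M := Nat.lt_succ_iff.mp (mem_range.mp hk)
        rw [← Ico_add_one_right_eq_Icc, sum_Ico_eq_sum_range, mul_sum,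
          show M + 1 - k + 1 - 1 = M - k + 1 by omega]
        refine sum_congr rfl fun j hj => ?_
        rw [add_comm 1 j]
        exact estimator_mul_trinomial_weight_eq p (1 - p) (by rw [mem_range] at hj; omega)
    _ = _ := by
        rw [sum_choose_mul_choose_mul_two_pow_mul M
            (fun s => (1 - p) ^ s * p ^ (2 * M - s) / (s + 1 : ℝ)),
          sum_choose_mul_pow_mul_pow_div_succ (2 * M) p (1 - p) hq]
        have h1 : (2 * M + 1 : ℝ) ≠ 0 := by positivity
        have h2 : (2 * (M + 1) - 1 : ℝ) = 2 * M + 1 := by ring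
        push_cast
        rw [h2, show 2 * (M + 1) = 2 * M + 1 + 1 by ring]
        field_simp
        ring
end
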